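/- arXiv:2105.06436 — 3 statements merged into one kernel-verified Lean document; each statement's English description precedes it below -/
import Mathlib

section
/- For vectors a, b ∈ ℝ^k, the minimum over 1 ≤ i ≤ k of |a_i b_i| is at most k^{-3/2} ‖a‖₁ ‖b‖₂. -/
/-! The minimum of the `|a i * b i|` is at most their geometric mean, which factors as the
geometric means of the `|a i|` and of the `|b i|`. By AM-GM, the first is at most `‖a‖₁ / k`, and
(applied to the squares) the second is at most `√(‖b‖₂² / k)`; the product of these two bounds is
`k ^ (-3/2) ‖a‖₁ ‖b‖₂`. -/

open Finset

namespace Real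

theorem prod_le_mean_pow {ι : Type*} (s : Finset ι) (f : ι → ℝ) (hf : ∀ i ∈ s, 0 ≤ f i) :
    ∏ i ∈ s, f i ≤ ((∑ i ∈ s, f i) / #s) ^ #s := by
  rcases s.eq_empty_or_nonempty with rfl | hs
  · simp
  have hcard : (0 : ℝ) < #s := by exact_mod_cast hs.card_pos
  have hprod : 0 ≤ ∏ i ∈ s, f i := prod_nonneg hf
  have amgm := geom_mean_le_arith_mean s (fun _ ↦ 1) f (fun _ _ ↦ zero_le_one)
    (by simpa using hcard) hf
  simp only [rpow_one, sum_const, nsmul_eq_mul, mul_one, one_mul] at amgm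
  calc ∏ i ∈ s, f i = ((∏ i ∈ s, f i) ^ (#s : ℝ)⁻¹) ^ #s := by
        rw [← rpow_natCast, ← rpow_mul hprod, inv_mul_cancel₀ hcard.ne', rpow_one]
    _ ≤ ((∑ i ∈ s, f i) / #s) ^ #s := by gcongr

theorem prod_abs_le_sqrt_mean_sq_pow {ι : Type*} (s : Finset ι) (f : ι → ℝ) :
    ∏ i ∈ s, |f i| ≤ √((∑ i ∈ s, f i ^ 2) / #s) ^ #s := by
  refine le_of_sq_le_sq ?_ (by positivity)
  rw [← pow_mul, mul_comm, pow_mul, sq_sqrt (by positivity), ← prod_pow]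
  simp_rw [sq_abs]
  exact prod_le_mean_pow s _ fun i _ ↦ sq_nonneg (f i)

theorem rpow_neg_three_halves_mul_mul_sqrt (k A B : ℝ) (hk : 0 < k) :
    k ^ (-(3 : ℝ) / 2) * A * √B = A / k * √(B / k) := by
  have hk32 : k ^ ((3 : ℝ) / 2) = k * √k := by
    rw [sqrt_eq_rpow, ← rpow_one_add' hk.le (by norm_num)]; norm_num
  rw [neg_div, rpow_neg hk.le, hk32, sqrt_div' _ hk.le]
  field_simp

end Real

open Finset in
theorem stmt1 (k : ℕ) (hk : 0 < k) (a b : Fin k → ℝ) :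
    ∃ i : Fin k, |a i * b i| ≤
      (k : ℝ) ^ (-(3 : ℝ) / 2) * (∑ j, |a j|) * Real.sqrt (∑ j, (b j) ^ 2) := by
  have : Nonempty (Fin k) := ⟨⟨0, hk⟩⟩
  obtain ⟨i, -, hmin⟩ := univ.exists_min_image (fun j ↦ |a j * b j|) univ_nonempty
  refine ⟨i, ?_⟩
  rw [Real.rpow_neg_three_halves_mul_mul_sqrt _ _ _ (by exact_mod_cast hk)]
  have hA := Real.prod_le_mean_pow univ (fun j ↦ |a j|) fun j _ ↦ abs_nonneg (a j)
  have hB := Real.prod_abs_le_sqrt_mean_sq_pow univ b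
  simp only [card_univ, Fintype.card_fin] at hA hB
  refine le_of_pow_le_pow_left₀ hk.ne' (by positivity) ?_
  calc |a i * b i| ^ k = ∏ _j, |a i * b i| := by simp
    _ ≤ ∏ j, |a j * b j| := prod_le_prod (fun _ _ ↦ abs_nonneg _) fun j _ ↦ hmin j (mem_univ j)
    _ = (∏ j, |a j|) * ∏ j, |b j| := by simp_rw [abs_mul, prod_mul_distrib]
    _ ≤ ((∑ j, |a j|) / k) ^ k * √((∑ j, b j ^ 2) / k) ^ k := by gcongr
    _ = _ := (mul_pow _ _ _).symm
end

section
/- Let A, a > 0, γ : ℝⁿ → (−∞,∞] convex, y, u ∈ dom γ, x ∈ ℝⁿ, and let x⁺ = argmin_w { a γ(w) + (1/2)‖w − x‖² }, ŷ = (A y + a x⁺)/(A+a) and x̃ = (A y + a x)/(A+a). Then A γ(y) + a γ(u) + (1/2)‖u − x‖² − (1/2)‖u − x⁺‖² ≥ A γ(y) + a γ(x⁺) + (1/2)‖x⁺ − x‖² ≥ (A+a)[γ(ŷ) + ((A+a)/(2a²))‖ŷ − x̃‖²]. -/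
open RealInnerProductSpace

private lemma quad_id {n : ℕ} (θ : ℝ) (p q : EuclideanSpace ℝ (Fin n)) :
    ‖θ • p + (1 - θ) • q‖ ^ 2 =
      θ * ‖p‖ ^ 2 + (1 - θ) * ‖q‖ ^ 2 - θ * (1 - θ) * ‖p - q‖ ^ 2 := by
  have h : ∀ v : EuclideanSpace ℝ (Fin n), ‖v‖ ^ 2 = ⟪v, v⟫ :=
    fun v => (real_inner_self_eq_norm_sq v).symm
  rw [h, h, h, h]
  simp only [inner_add_left, inner_add_right, inner_sub_left, inner_sub_right,
    real_inner_smul_left, real_inner_smul_right]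
  rw [real_inner_comm q p]
  ring

set_option maxHeartbeats 1000000 in
theorem stmt12 (n : ℕ) (A a : ℝ) (hA : 0 < A) (ha : 0 < a)
    (γ : EuclideanSpace ℝ (Fin n) → EReal)
    (hbot : ∀ z, γ z ≠ ⊥)
    (hconv : ∀ z zb : EuclideanSpace ℝ (Fin n), ∀ θ : ℝ, 0 ≤ θ → θ ≤ 1 →
      γ (θ • z + (1 - θ) • zb) ≤ ((θ : ℝ) : EReal) * γ z + (((1 - θ) : ℝ) : EReal) * γ zb)
    (y u x xp : EuclideanSpace ℝ (Fin n))
    (hy : γ y ≠ ⊤) (hu : γ u ≠ ⊤)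
    (hxp : ∀ w, ((a : ℝ) : EReal) * γ xp + ((1 / 2 * ‖xp - x‖ ^ 2 : ℝ) : EReal) ≤
      ((a : ℝ) : EReal) * γ w + ((1 / 2 * ‖w - x‖ ^ 2 : ℝ) : EReal))
    (yh xt : EuclideanSpace ℝ (Fin n))
    (hyh : yh = (A + a)⁻¹ • (A • y + a • xp))
    (hxt : xt = (A + a)⁻¹ • (A • y + a • x)) :
    (((A : ℝ) : EReal) * γ y + ((a : ℝ) : EReal) * γ xp + ((1 / 2 * ‖xp - x‖ ^ 2 : ℝ) : EReal) ≤
      ((A : ℝ) : EReal) * γ y + ((a : ℝ) : EReal) * γ u +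
        ((1 / 2 * ‖u - x‖ ^ 2 : ℝ) : EReal) - ((1 / 2 * ‖u - xp‖ ^ 2 : ℝ) : EReal)) ∧
    ((((A + a) : ℝ) : EReal) * γ yh +
        (((A + a) ^ 2 / (2 * a ^ 2) * ‖yh - xt‖ ^ 2 : ℝ) : EReal) ≤
      ((A : ℝ) : EReal) * γ y + ((a : ℝ) : EReal) * γ xp +
        ((1 / 2 * ‖xp - x‖ ^ 2 : ℝ) : EReal)) ∧
    ((((A + a) : ℝ) : EReal) *
        (γ yh + (((A + a) / (2 * a ^ 2) * ‖yh - xt‖ ^ 2 : ℝ) : EReal)) ≤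
      ((A : ℝ) : EReal) * γ y + ((a : ℝ) : EReal) * γ u +
        ((1 / 2 * ‖u - x‖ ^ 2 : ℝ) : EReal) - ((1 / 2 * ‖u - xp‖ ^ 2 : ℝ) : EReal)) := by
  have hAa : 0 < A + a := by linarith
  obtain ⟨gy, hgy⟩ : ∃ r : ℝ, γ y = (r : EReal) := ⟨_, (EReal.coe_toReal hy (hbot y)).symm⟩
  obtain ⟨gu, hgu⟩ : ∃ r : ℝ, γ u = (r : EReal) := ⟨_, (EReal.coe_toReal hu (hbot u)).symm⟩
  -- γ xp is finite
  have hxpt : γ xp ≠ ⊤ := by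
    intro h
    have h1 := hxp u
    rw [h, hgu, EReal.coe_mul_top_of_pos ha, EReal.top_add_coe] at h1
    rw [top_le_iff] at h1
    have : ((a * gu + 1 / 2 * ‖u - x‖ ^ 2 : ℝ) : EReal) = ⊤ := by push_cast; exact h1
    exact EReal.coe_ne_top _ this
  obtain ⟨gp, hgp⟩ : ∃ r : ℝ, γ xp = (r : EReal) := ⟨_, (EReal.coe_toReal hxpt (hbot xp)).symm⟩
  -- strong convexity: key real inequality 1
  have key1 : a * gp + 1 / 2 * ‖xp - x‖ ^ 2 ≤
      a * gu + 1 / 2 * ‖u - x‖ ^ 2 - 1 / 2 * ‖u - xp‖ ^ 2 := by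
    have step : ∀ θ : ℝ, 0 < θ → θ ≤ 1 →
        a * gp + 1 / 2 * ‖xp - x‖ ^ 2 ≤
          a * gu + 1 / 2 * ‖u - x‖ ^ 2 - (1 - θ) / 2 * ‖u - xp‖ ^ 2 := by
      intro θ hθ hθ1
      set w : EuclideanSpace ℝ (Fin n) := θ • u + (1 - θ) • xp with hw
      have hc := hconv u xp θ hθ.le hθ1
      rw [hgu, hgp] at hc
      have hc' : γ w ≤ ((θ * gu + (1 - θ) * gp : ℝ) : EReal) := by
        refine hc.trans_eq ?_
        push_cast
        rfl
      have h2 := hxp w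
      have h3 : ((a : ℝ) : EReal) * γ w ≤ ((a * (θ * gu + (1 - θ) * gp) : ℝ) : EReal) := by
        calc ((a : ℝ) : EReal) * γ w ≤ ((a : ℝ) : EReal) * ((θ * gu + (1 - θ) * gp : ℝ) : EReal) :=
              mul_le_mul_of_nonneg_left hc' (by exact_mod_cast ha.le)
          _ = _ := by norm_cast
      have h4 : ((a : ℝ) : EReal) * γ xp + ((1 / 2 * ‖xp - x‖ ^ 2 : ℝ) : EReal) ≤
          ((a * (θ * gu + (1 - θ) * gp) + 1 / 2 * ‖w - x‖ ^ 2 : ℝ) : EReal) := by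
        refine h2.trans ?_
        calc ((a : ℝ) : EReal) * γ w + ((1 / 2 * ‖w - x‖ ^ 2 : ℝ) : EReal)
            ≤ ((a * (θ * gu + (1 - θ) * gp) : ℝ) : EReal) + ((1 / 2 * ‖w - x‖ ^ 2 : ℝ) : EReal) :=
              add_le_add_left h3 _
          _ = _ := by norm_cast
      rw [hgp] at h4
      have h5 : a * gp + 1 / 2 * ‖xp - x‖ ^ 2 ≤
          a * (θ * gu + (1 - θ) * gp) + 1 / 2 * ‖w - x‖ ^ 2 := by
        exact_mod_cast h4
      have hq : ‖w - x‖ ^ 2 = θ * ‖u - x‖ ^ 2 + (1 - θ) * ‖xp - x‖ ^ 2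
          - θ * (1 - θ) * ‖(u - x) - (xp - x)‖ ^ 2 := by
        have : w - x = θ • (u - x) + (1 - θ) • (xp - x) := by
          rw [hw]; module
        rw [this, quad_id]
      have hd : (u - x) - (xp - x) = u - xp := by abel
      rw [hd] at hq
      rw [hq] at h5
      -- θ * (a gp + Qp) ≤ θ * (a gu + Qu − (1−θ)/2 c)
      have h6 : θ * (a * gp + 1 / 2 * ‖xp - x‖ ^ 2) ≤
          θ * (a * gu + 1 / 2 * ‖u - x‖ ^ 2 - (1 - θ) / 2 * ‖u - xp‖ ^ 2) := by
        nlinarith [h5]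
      exact le_of_mul_le_mul_left (by linarith [h6]) hθ
    by_contra hcon
    push_neg at hcon
    set c := ‖u - xp‖ ^ 2 with hc
    have hc0 : 0 ≤ c := sq_nonneg _
    set L := a * gp + 1 / 2 * ‖xp - x‖ ^ 2
    set R := a * gu + 1 / 2 * ‖u - x‖ ^ 2
    have hε : 0 < L - (R - 1 / 2 * c) := by dsimp [L, R] at hcon ⊢; linarith
    rcases eq_or_lt_of_le hc0 with hceq | hcpos
    · have := step 1 one_pos le_rfl
      dsimp [L, R] at hε this
      rw [← hceq] at hε
      nlinarith [this]
    · set θ := min 1 ((L - (R - 1 / 2 * c)) / c) with hθdef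
      have hθpos : 0 < θ := lt_min one_pos (div_pos hε hcpos)
      have hθ1 : θ ≤ 1 := min_le_left _ _
      have := step θ hθpos hθ1
      have hθle : θ ≤ (L - (R - 1 / 2 * c)) / c := min_le_right _ _
      have : L ≤ R - 1 / 2 * c + θ / 2 * c := by dsimp [L, R] at this ⊢; linarith
      rw [le_div_iff₀ hcpos] at hθle
      linarith
  -- convexity at yh
  have hAfrac : (0:ℝ) ≤ A / (A + a) := by positivity
  have hAfrac1 : A / (A + a) ≤ 1 := by
    rw [div_le_one hAa]; linarith
  have hyh' : yh = (A / (A + a)) • y + (1 - A / (A + a)) • xp := by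
    rw [hyh]
    have h1 : 1 - A / (A + a) = a / (A + a) := by field_simp; ring
    rw [h1]
    rw [smul_add, smul_smul, smul_smul]
    congr 1 <;> congr 1 <;> field_simp <;> ring
  have hcy := hconv y xp (A / (A + a)) hAfrac hAfrac1
  rw [← hyh', hgy, hgp] at hcy
  have h1frac : 1 - A / (A + a) = a / (A + a) := by field_simp; ring
  have hcy' : γ yh ≤ ((A / (A + a) * gy + a / (A + a) * gp : ℝ) : EReal) := by
    refine hcy.trans_eq ?_
    rw [h1frac]
    push_cast
    rfl
  have hyht : γ yh ≠ ⊤ := fun h => by rw [h] at hcy'; exact EReal.coe_ne_top _ (top_le_iff.mp hcy')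
  obtain ⟨gh, hgh⟩ : ∃ r : ℝ, γ yh = (r : EReal) := ⟨_, (EReal.coe_toReal hyht (hbot yh)).symm⟩
  have hghle : gh ≤ A / (A + a) * gy + a / (A + a) * gp := by
    rw [hgh] at hcy'; exact_mod_cast hcy'
  have hghle2 : (A + a) * gh ≤ A * gy + a * gp := by
    have := mul_le_mul_of_nonneg_left hghle hAa.le
    calc (A + a) * gh ≤ (A + a) * (A / (A + a) * gy + a / (A + a) * gp) := this
      _ = A * gy + a * gp := by field_simp
  -- norm of yh - xt
  have hdiff : yh - xt = (a / (A + a)) • (xp - x) := by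
    rw [hyh, hxt]
    rw [div_eq_inv_mul]
    module
  have hnorm : ‖yh - xt‖ ^ 2 = (a / (A + a)) ^ 2 * ‖xp - x‖ ^ 2 := by
    rw [hdiff, norm_smul]
    rw [Real.norm_eq_abs, mul_pow, sq_abs]
  have hquadeq : (A + a) ^ 2 / (2 * a ^ 2) * ‖yh - xt‖ ^ 2 = 1 / 2 * ‖xp - x‖ ^ 2 := by
    rw [hnorm]; field_simp
  -- key real inequality 2
  have key2 : (A + a) * gh + (A + a) ^ 2 / (2 * a ^ 2) * ‖yh - xt‖ ^ 2 ≤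
      A * gy + a * gp + 1 / 2 * ‖xp - x‖ ^ 2 := by
    rw [hquadeq]; linarith
  refine ⟨?_, ?_, ?_⟩
  · rw [hgy, hgu, hgp]
    have e1 : ((A : ℝ) : EReal) * (gy : EReal) + ((a : ℝ) : EReal) * (gp : EReal) +
        ((1 / 2 * ‖xp - x‖ ^ 2 : ℝ) : EReal)
        = ((A * gy + a * gp + 1 / 2 * ‖xp - x‖ ^ 2 : ℝ) : EReal) := by norm_cast
    have e2 : ((A : ℝ) : EReal) * (gy : EReal) + ((a : ℝ) : EReal) * (gu : EReal) +
        ((1 / 2 * ‖u - x‖ ^ 2 : ℝ) : EReal) - ((1 / 2 * ‖u - xp‖ ^ 2 : ℝ) : EReal)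
        = ((A * gy + a * gu + 1 / 2 * ‖u - x‖ ^ 2 - 1 / 2 * ‖u - xp‖ ^ 2 : ℝ) : EReal) := by
      norm_cast
    rw [e1, e2]
    exact EReal.coe_le_coe_iff.mpr (by linarith)
  · rw [hgy, hgp, hgh]
    have e1 : ((A + a : ℝ) : EReal) * (gh : EReal) +
        (((A + a) ^ 2 / (2 * a ^ 2) * ‖yh - xt‖ ^ 2 : ℝ) : EReal)
        = (((A + a) * gh + (A + a) ^ 2 / (2 * a ^ 2) * ‖yh - xt‖ ^ 2 : ℝ) : EReal) := by norm_cast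
    have e2 : ((A : ℝ) : EReal) * (gy : EReal) + ((a : ℝ) : EReal) * (gp : EReal) +
        ((1 / 2 * ‖xp - x‖ ^ 2 : ℝ) : EReal)
        = ((A * gy + a * gp + 1 / 2 * ‖xp - x‖ ^ 2 : ℝ) : EReal) := by norm_cast
    rw [e1, e2]
    exact EReal.coe_le_coe_iff.mpr key2
  · rw [hgy, hgu, hgh]
    have : ((A + a : ℝ) : EReal) * ((gh : EReal) + (((A + a) / (2 * a ^ 2) * ‖yh - xt‖ ^ 2 : ℝ) : EReal))
        = (((A + a) * (gh + (A + a) / (2 * a ^ 2) * ‖yh - xt‖ ^ 2) : ℝ) : EReal) := by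
      norm_cast
    rw [this]
    have hr : (A + a) * (gh + (A + a) / (2 * a ^ 2) * ‖yh - xt‖ ^ 2) ≤
        A * gy + a * gu + 1 / 2 * ‖u - x‖ ^ 2 - 1 / 2 * ‖u - xp‖ ^ 2 := by
      have hexp : (A + a) * (gh + (A + a) / (2 * a ^ 2) * ‖yh - xt‖ ^ 2)
          = (A + a) * gh + (A + a) ^ 2 / (2 * a ^ 2) * ‖yh - xt‖ ^ 2 := by
        ring
      rw [hexp]; linarith
    have e2 : ((A : ℝ) : EReal) * (gy : EReal) + ((a : ℝ) : EReal) * (gu : EReal) +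
        ((1 / 2 * ‖u - x‖ ^ 2 : ℝ) : EReal) - ((1 / 2 * ‖u - xp‖ ^ 2 : ℝ) : EReal)
        = ((A * gy + a * gu + 1 / 2 * ‖u - x‖ ^ 2 - 1 / 2 * ‖u - xp‖ ^ 2 : ℝ) : EReal) := by
      norm_cast
    rw [e2]
    exact EReal.coe_le_coe_iff.mpr hr
end

section
/- Let {M_i}_{i≥0} be positive with i M_i ≤ k M_k for 1 ≤ i ≤ k, let {A_i} be a nondecreasing positive sequence with A_i M_i ≥ i²/12 for i ≥ 4, and let {L_i} be nonnegative with average L_k^{avg} = (1/k)Σ_{i=0}^{k−1}L_i. Then for every k ≥ 12, Σ_{i=⌈k/3⌉}^{k−1} (M_i + L_i)/√(A_{i+1} M_i) ≤ 6√3 (2 M_k + L_k^{avg}). -/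
/-!
Since `A` is nondecreasing, `A (i+1) * M i ≥ A i * M i ≥ i² / 12`, so each summand is at most
`2√3 (M i + L i) / i`. On `[k/3, k)` the weights `1/i` are at most `3/k`, which bounds the `L`-part
by `3 L_k^{avg}`; and `M i / i ≤ k M_k / i² ≤ 9 M_k / k` over at most `2k/3` indices bounds the
`M`-part by `6 M_k`.
-/

open Finset

lemma div_sqrt_le_two_sqrt_three_mul_div {x p i : ℝ} (hi : 0 < i) (hx : 0 ≤ x)
    (hp : i ^ 2 / 12 ≤ p) : x / √p ≤ 2 * √3 * (x / i) := by
  have h3 : √3 ^ 2 = 3 := Real.sq_sqrt (by norm_num)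
  have hlow : i / (2 * √3) ≤ √p := by
    rw [Real.le_sqrt' (by positivity)]
    calc (i / (2 * √3)) ^ 2 = i ^ 2 / 12 := by rw [div_pow, mul_pow, h3]; ring
      _ ≤ p := hp
  calc x / √p ≤ x / (i / (2 * √3)) := by gcongr
    _ = 2 * √3 * (x / i) := by field_simp

section WeightedSums

variable {m k : ℕ}

lemma sum_Ico_div_le_six_mul {M : ℕ → ℝ} {c : ℝ} (hm : 0 < m) (hkm : k ≤ 3 * m) (hc : 0 ≤ c)
    (hM : ∀ i ∈ Ico m k, (i : ℝ) * M i ≤ k * c) : ∑ i ∈ Ico m k, M i / i ≤ 6 * c := by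
  rcases le_or_gt k m with hkm' | hmk
  · simpa [Ico_eq_empty_of_le hkm'] using hc
  have hmR : (0 : ℝ) < m := by exact_mod_cast hm
  have hterm : ∀ i ∈ Ico m k, M i / i ≤ k * c / (m : ℝ) ^ 2 := by
    intro i hi
    have hmi : (m : ℝ) ≤ i := by exact_mod_cast (mem_Ico.mp hi).1
    calc M i / i = i * M i / (i : ℝ) ^ 2 := by field_simp
      _ ≤ k * c / (i : ℝ) ^ 2 := div_le_div_of_nonneg_right (hM i hi) (by positivity)
      _ ≤ k * c / (m : ℝ) ^ 2 := by gcongr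
  have hkmR : (k : ℝ) ≤ 3 * m := by exact_mod_cast hkm
  have hcount : ((k : ℝ) - m) * k ≤ 6 * (m : ℝ) ^ 2 := by nlinarith
  calc ∑ i ∈ Ico m k, M i / i ≤ #(Ico m k) • (k * c / (m : ℝ) ^ 2) := sum_le_card_nsmul _ _ _ hterm
    _ = ((k : ℝ) - m) * k * c / (m : ℝ) ^ 2 := by
        rw [nsmul_eq_mul, Nat.card_Ico, Nat.cast_sub hmk.le]; ring
    _ ≤ 6 * (m : ℝ) ^ 2 * c / (m : ℝ) ^ 2 := by gcongr
    _ = 6 * c := by field_simp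

lemma sum_Ico_div_le_three_div_mul_sum_range {L : ℕ → ℝ} (hL : ∀ i, 0 ≤ L i) (hm : 0 < m)
    (hkm : k ≤ 3 * m) : ∑ i ∈ Ico m k, L i / i ≤ 3 / k * ∑ i ∈ range k, L i := by
  rw [mul_sum]
  calc ∑ i ∈ Ico m k, L i / i ≤ ∑ i ∈ Ico m k, 3 / k * L i := by
        refine sum_le_sum fun i hi => ?_
        obtain ⟨hmi, hik⟩ := mem_Ico.mp hi
        have hki : (k : ℝ) ≤ 3 * i := by exact_mod_cast (by omega : k ≤ 3 * i)
        have hi0 : (0 : ℝ) < i := by exact_mod_cast hm.trans_le hmi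
        rw [div_mul_eq_mul_div, div_le_div_iff₀ hi0 (by exact_mod_cast hm.trans_le hmi |>.trans hik)]
        nlinarith [hL i]
    _ ≤ ∑ i ∈ range k, 3 / k * L i :=
        sum_le_sum_of_subset_of_nonneg (fun i hi => mem_range.mpr (mem_Ico.mp hi).2)
          fun i _ _ => mul_nonneg (by positivity) (hL i)

end WeightedSums

open Finset in
theorem stmt18_general (M A L : ℕ → ℝ)
    (hMpos : ∀ i, 0 < M i) (hAmono : Monotone A)
    (hLnn : ∀ i, 0 ≤ L i)
    (k : ℕ) (hk : 12 ≤ k)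
    (hMk : ∀ i, 1 ≤ i → i ≤ k → (i : ℝ) * M i ≤ (k : ℝ) * M k)
    (hAM : ∀ i : ℕ, 4 ≤ i → (i : ℝ) ^ 2 / 12 ≤ A i * M i) :
    ∑ i ∈ Icc ⌈(k : ℝ) / 3⌉₊ (k - 1), (M i + L i) / Real.sqrt (A (i + 1) * M i) ≤
      6 * Real.sqrt 3 * (2 * M k + (1 / (k : ℝ)) * ∑ i ∈ range k, L i) := by
  set m := ⌈(k : ℝ) / 3⌉₊
  have hkm : k ≤ 3 * m := by
    have : (k : ℝ) / 3 ≤ m := Nat.le_ceil _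
    exact_mod_cast (by linarith : (k : ℝ) ≤ 3 * m)
  have hm : 4 ≤ m := by omega
  rw [Icc_sub_one_right_eq_Ico_of_not_isMin (by simp only [isMin_iff_eq_bot, Nat.bot_eq_zero]; omega)]
  calc ∑ i ∈ Ico m k, (M i + L i) / √(A (i + 1) * M i)
      ≤ ∑ i ∈ Ico m k, 2 * √3 * (M i / i + L i / i) := by
        refine sum_le_sum fun i hi => ?_
        have hi4 : 4 ≤ i := hm.trans (mem_Ico.mp hi).1
        rw [← add_div]
        refine div_sqrt_le_two_sqrt_three_mul_div (by positivity) (by linarith [hMpos i, hLnn i]) ?_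
        exact (hAM i hi4).trans (by gcongr; exacts [(hMpos i).le, hAmono i.le_succ])
    _ = 2 * √3 * (∑ i ∈ Ico m k, M i / i + ∑ i ∈ Ico m k, L i / i) := by
        rw [← sum_add_distrib, mul_sum]
    _ ≤ 2 * √3 * (6 * M k + 3 / k * ∑ i ∈ range k, L i) := by
        gcongr
        · exact sum_Ico_div_le_six_mul (by omega) hkm (hMpos k).le
            fun i hi => hMk i (by linarith [(mem_Ico.mp hi).1]) (mem_Ico.mp hi).2.le
        · exact sum_Ico_div_le_three_div_mul_sum_range hLnn (by omega) hkm
    _ = 6 * √3 * (2 * M k + 1 / k * ∑ i ∈ range k, L i) := by ring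

open Finset in
theorem stmt18 (M A L : ℕ → ℝ)
    (hMpos : ∀ i, 0 < M i) (hApos : ∀ i, 0 < A i) (hAmono : Monotone A)
    (hLnn : ∀ i, 0 ≤ L i)
    (k : ℕ) (hk : 12 ≤ k)
    (hMk : ∀ i, 1 ≤ i → i ≤ k → (i : ℝ) * M i ≤ (k : ℝ) * M k)
    (hAM : ∀ i : ℕ, 4 ≤ i → (i : ℝ) ^ 2 / 12 ≤ A i * M i) :
    ∑ i ∈ Icc ⌈(k : ℝ) / 3⌉₊ (k - 1), (M i + L i) / Real.sqrt (A (i + 1) * M i) ≤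
      6 * Real.sqrt 3 * (2 * M k + (1 / (k : ℝ)) * ∑ i ∈ range k, L i) :=
  stmt18_general M A L hMpos hAmono hLnn k hk hMk hAM
end
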